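/- arXiv:1909.02479 — 2 statements merged into one kernel-verified Lean document; each statement's English description precedes it below -/
import Mathlib

section
/- For any functions s : Fin 3 → (Fin 3 → Bool) and t : Fin 3 → (Fin 3 → Bool) such that for every r the bits s r have even parity (s r 0 ⊕ s r 1 ⊕ s r 2 = false) and for every c the bits t c have odd parity (t c 0 ⊕ t c 1 ⊕ t c 2 = true), there exists a pair (r, c) with s r c ≠ t c r. Consequently, every deterministic strategy for the magic square game loses on at least one of the 9 question pairs, so the uniform winning probability of any deterministic strategy is at most 8/9. -/
lemma magic_aux : ∀ a b c d e f g h i : Bool,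
    a.xor (b.xor c) = false → d.xor (e.xor f) = false → g.xor (h.xor i) = false →
    a.xor (d.xor g) = true → b.xor (e.xor h) = true → c.xor (f.xor i) = true → False := by
  decide

open Finset in
theorem magic_square_deterministic_loses
    (s t : Fin 3 → (Fin 3 → Bool))
    (hs : ∀ r, (s r 0).xor ((s r 1).xor (s r 2)) = false)
    (ht : ∀ c, (t c 0).xor ((t c 1).xor (t c 2)) = true) :
    (∃ r c, s r c ≠ t c r) ∧
    ((Finset.univ.filter
        (fun rc : Fin 3 × Fin 3 => s rc.1 rc.2 = t rc.2 rc.1)).card : ℝ) / 9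
      ≤ 8 / 9 := by
  have hex : ∃ r c, s r c ≠ t c r := by
    by_contra hc
    push_neg at hc
    have hcol : ∀ c : Fin 3, (s 0 c).xor ((s 1 c).xor (s 2 c)) = true := by
      intro c
      rw [hc 0 c, hc 1 c, hc 2 c]
      exact ht c
    exact magic_aux (s 0 0) (s 0 1) (s 0 2) (s 1 0) (s 1 1) (s 1 2) (s 2 0) (s 2 1) (s 2 2)
      (hs 0) (hs 1) (hs 2) (hcol 0) (hcol 1) (hcol 2)
  refine ⟨hex, ?_⟩
  obtain ⟨r, c, hrc⟩ := hex
  have hss : (Finset.univ.filter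
      (fun rc : Fin 3 × Fin 3 => s rc.1 rc.2 = t rc.2 rc.1)) ⊂ Finset.univ := by
    refine Finset.ssubset_univ_iff.2 ?_
    intro h
    have : (r, c) ∈ Finset.univ.filter
        (fun rc : Fin 3 × Fin 3 => s rc.1 rc.2 = t rc.2 rc.1) := by
      rw [h]; exact Finset.mem_univ _
    exact hrc (by simpa using this)
  have hcard : (Finset.univ.filter
      (fun rc : Fin 3 × Fin 3 => s rc.1 rc.2 = t rc.2 rc.1)).card ≤ 8 := by
    have := Finset.card_lt_card hss
    simp only [Finset.card_univ, Fintype.card_prod, Fintype.card_fin] at this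
    omega
  have : ((Finset.univ.filter
      (fun rc : Fin 3 × Fin 3 => s rc.1 rc.2 = t rc.2 rc.1)).card : ℝ) ≤ 8 := by
    exact_mod_cast hcard
  linarith
end

section
/- Entropy continuity (Fannes–Audenaert/Zhang form for classical distributions): If p and q are probability distributions on a finite set of size n ≥ 2 with total variation distance d_TV(p,q) = (1/2)∑ₓ|p(x)−q(x)| = t ≤ 1 − 1/n, then |H(p) − H(q)| ≤ t·log₂(n−1) + h(t). -/
open Real Finset

/-- Log-sum inequality. -/
lemma logSum {ι : Type*} (S : Finset ι) (a b : ι → ℝ)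
    (ha : ∀ i ∈ S, 0 ≤ a i) (hb : ∀ i ∈ S, 0 ≤ b i)
    (hab : ∀ i ∈ S, b i = 0 → a i = 0) :
    (∑ i ∈ S, a i) * Real.log ((∑ i ∈ S, a i) / (∑ i ∈ S, b i))
      ≤ ∑ i ∈ S, a i * Real.log (a i / b i) := by
  set T := ∑ i ∈ S, a i with hT
  set B := ∑ i ∈ S, b i with hB
  rcases eq_or_lt_of_le (Finset.sum_nonneg ha) with h0 | hTpos
  · -- T = 0, so all a i = 0
    have hz : ∀ i ∈ S, a i = 0 := by
      intro i hi
      exact (Finset.sum_eq_zero_iff_of_nonneg ha).1 h0.symm i hi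
    rw [hT, ← h0]
    simp only [zero_mul]
    refine Finset.sum_nonneg fun i hi => ?_
    rw [hz i hi]; simp
  · -- T > 0, hence some a i > 0, hence B > 0
    have hBpos : 0 < B := by
      obtain ⟨i, hi, hai⟩ : ∃ i ∈ S, a i ≠ 0 := by
        by_contra h
        push_neg at h
        have : T = 0 := Finset.sum_eq_zero h
        linarith
      have hbi : 0 < b i := by
        rcases (hb i hi).lt_or_eq with h | h
        · exact h
        · exact absurd (hab i hi h.symm) hai
      exact lt_of_lt_of_le hbi (Finset.single_le_sum hb hi)
    set S' := S.filter (fun i => a i ≠ 0) with hS'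
    have key : ∀ i ∈ S', a i - b i * T / B ≤ a i * Real.log (a i / b i) - a i * Real.log (T / B) := by
      intro i hi
      rw [Finset.mem_filter] at hi
      obtain ⟨hiS, hai⟩ := hi
      have hapos : 0 < a i := (ha i hiS).lt_of_ne (Ne.symm hai)
      have hbpos : 0 < b i := by
        rcases (hb i hiS).lt_or_eq with h | h
        · exact h
        · exact absurd (hab i hiS h.symm) hai
      have hr : (0:ℝ) < (a i / b i) / (T / B) := by positivity
      have hlog : 1 - ((a i / b i) / (T / B))⁻¹ ≤ Real.log ((a i / b i) / (T / B)) :=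
        Real.one_sub_inv_le_log_of_pos hr
      have hsplit : Real.log ((a i / b i) / (T / B)) = Real.log (a i / b i) - Real.log (T / B) :=
        Real.log_div (by positivity) (by positivity)
      rw [hsplit] at hlog
      have := mul_le_mul_of_nonneg_left hlog hapos.le
      calc a i - b i * T / B = a i * (1 - ((a i / b i) / (T / B))⁻¹) := by
            field_simp
        _ ≤ a i * (Real.log (a i / b i) - Real.log (T / B)) := this
        _ = a i * Real.log (a i / b i) - a i * Real.log (T / B) := by ring
    have hsum' : ∑ i ∈ S', (a i - b i * T / B) ≤
        ∑ i ∈ S', (a i * Real.log (a i / b i) - a i * Real.log (T / B)) :=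
      Finset.sum_le_sum key
    have hTa : ∑ i ∈ S', a i = T := by
      rw [hT, hS']
      exact Finset.sum_filter_ne_zero S
    have hBb : ∑ i ∈ S', b i ≤ B := by
      refine Finset.sum_le_sum_of_subset_of_nonneg (Finset.filter_subset _ _) ?_
      intro i hi _; exact hb i hi
    have hlhs : T - T ≤ ∑ i ∈ S', (a i - b i * T / B) := by
      rw [Finset.sum_sub_distrib, hTa]
      have : ∑ i ∈ S', b i * T / B ≤ T := by
        have heq : ∑ i ∈ S', b i * T / B = (∑ i ∈ S', b i) * T / B := by
          rw [← Finset.sum_div, ← Finset.sum_mul]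
        rw [heq]
        calc (∑ i ∈ S', b i) * T / B ≤ B * T / B := by
              gcongr
          _ = T := by field_simp
      linarith
    have hrhs : ∑ i ∈ S', (a i * Real.log (a i / b i) - a i * Real.log (T / B)) =
        (∑ i ∈ S', a i * Real.log (a i / b i)) - T * Real.log (T / B) := by
      rw [Finset.sum_sub_distrib, ← Finset.sum_mul, hTa]
    have hfull : ∑ i ∈ S', a i * Real.log (a i / b i) = ∑ i ∈ S, a i * Real.log (a i / b i) := by
      rw [hS']
      apply Finset.sum_filter_of_ne
      intro i _ h
      intro hai
      rw [hai] at h; simp at h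
    simp only [sub_self] at hlhs
    rw [hrhs, hfull] at hsum'
    linarith [hsum'.trans' hlhs]

/-- Jensen-type: entropy of a subdistribution of total mass `e` on `S` is at most
`negMulLog e + e * log |S|`. -/
lemma jensenCard {ι : Type*} (S : Finset ι) (c : ι → ℝ) (hc : ∀ i ∈ S, 0 ≤ c i) :
    ∑ i ∈ S, Real.negMulLog (c i) ≤
      Real.negMulLog (∑ i ∈ S, c i) + (∑ i ∈ S, c i) * Real.log (S.card) := by
  set E := ∑ i ∈ S, c i with hE
  rcases eq_or_lt_of_le (Finset.sum_nonneg hc) with h0 | hEpos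
  · have hz : ∀ i ∈ S, c i = 0 := (Finset.sum_eq_zero_iff_of_nonneg hc).1 h0.symm
    have h1 : ∑ i ∈ S, Real.negMulLog (c i) = 0 := by
      apply Finset.sum_eq_zero; intro i hi; rw [hz i hi]; simp
    rw [h1, hE, ← h0]; simp
  · have hcard : 0 < S.card := by
      rcases Finset.eq_empty_or_nonempty S with rfl | hne
      · simp [hE] at hEpos
      · exact Finset.card_pos.2 hne
    have key := logSum S c (fun _ => 1) hc (fun i _ => zero_le_one) (fun i _ h => by norm_num at h)
    simp only [Finset.sum_const, nsmul_eq_mul, mul_one] at key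
    have hlog : Real.log (E / S.card) = Real.log E - Real.log S.card :=
      Real.log_div hEpos.ne' (by positivity)
    have h2 : ∑ i ∈ S, c i * Real.log (c i) = -∑ i ∈ S, Real.negMulLog (c i) := by
      simp [Real.negMulLog, Finset.sum_neg_distrib]
    simp only [div_one] at key
    rw [h2] at key
    have h3 : E * (Real.log E - Real.log S.card) = -(Real.negMulLog E + E * Real.log S.card) := by
      simp [Real.negMulLog]; ring
    rw [← hE, hlog, h3] at key
    linarith

/-- Subadditivity of `negMulLog` over a finite sum of nonnegatives. -/
lemma subaddNegMulLog {ι : Type*} (S : Finset ι) (c : ι → ℝ) (hc : ∀ i ∈ S, 0 ≤ c i) :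
    Real.negMulLog (∑ i ∈ S, c i) ≤ ∑ i ∈ S, Real.negMulLog (c i) := by
  set E := ∑ i ∈ S, c i with hE
  have hEnn : 0 ≤ E := Finset.sum_nonneg hc
  have h1 : Real.negMulLog E = ∑ i ∈ S, (-(c i * Real.log E)) := by
    rw [Real.negMulLog, neg_mul, hE, Finset.sum_mul]
    simp
  rw [h1]
  apply Finset.sum_le_sum
  intro i hi
  rcases (hc i hi).eq_or_lt with h | h
  · rw [← h]; simp
  · have hle : c i ≤ E := Finset.single_le_sum hc hi
    have : Real.log (c i) ≤ Real.log E := Real.log_le_log h hle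
    rw [Real.negMulLog, neg_mul]
    nlinarith

lemma splitEnt {m b : ℝ} (hm : 0 ≤ m) (hb : 0 ≤ b) :
    Real.negMulLog m + Real.negMulLog b - Real.negMulLog (m + b)
      = -(m * Real.log (m / (m + b))) - b * Real.log (b / (m + b)) := by
  rcases hm.eq_or_lt with hm0 | hm0
  · rw [← hm0]
    rcases hb.eq_or_lt with hb0 | hb0
    · rw [← hb0]; simp
    · simp [div_self hb0.ne']
  · rcases hb.eq_or_lt with hb0 | hb0
    · rw [← hb0]; simp [div_self hm0.ne']
    · have hq : 0 < m + b := by linarith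
      rw [Real.log_div hm0.ne' hq.ne', Real.log_div hb0.ne' hq.ne']
      simp only [Real.negMulLog]
      ring

lemma one_sided {α : Type*} [Fintype α] (hn : 2 ≤ Fintype.card α)
    (p q : α → ℝ) (hp : ∀ x, 0 ≤ p x) (hq : ∀ x, 0 ≤ q x)
    (hpsum : ∑ x, p x = 1) (hqsum : ∑ x, q x = 1)
    (t : ℝ) (ht : (1 / 2) * ∑ x, |p x - q x| = t) (htpos : 0 < t) :
    ∑ x, Real.negMulLog (p x) ≤ ∑ x, Real.negMulLog (q x)
      + t * Real.log ((Fintype.card α : ℝ) - 1)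
      + (Real.negMulLog t + Real.negMulLog (1 - t)) := by
  classical
  set m : α → ℝ := fun x => min (p x) (q x) with hm
  set a : α → ℝ := fun x => p x - m x with ha
  set b : α → ℝ := fun x => q x - m x with hb
  have hm0 : ∀ x, 0 ≤ m x := fun x => le_min (hp x) (hq x)
  have ha0 : ∀ x, 0 ≤ a x := fun x => sub_nonneg.2 (min_le_left _ _)
  have hb0 : ∀ x, 0 ≤ b x := fun x => sub_nonneg.2 (min_le_right _ _)
  have hab0 : ∀ x, a x * b x = 0 := by
    intro x
    rcases le_total (p x) (q x) with h | h
    · have : m x = p x := min_eq_left h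
      simp [ha, hb, this]
    · have : m x = q x := min_eq_right h
      simp [ha, hb, this]
  have habs : ∀ x, |p x - q x| = p x + q x - 2 * m x := by
    intro x
    have h1 : max (p x) (q x) - min (p x) (q x) = |p x - q x| := by
      rw [abs_sub_comm]; exact max_sub_min_eq_abs _ _
    have h2 : min (p x) (q x) + max (p x) (q x) = p x + q x := min_add_max _ _
    simp only [hm]
    linarith
  have hmsum : ∑ x, m x = 1 - t := by
    have heq : ∑ x, |p x - q x| = ∑ x, (p x + q x - 2 * m x) :=
      Finset.sum_congr rfl (fun x _ => habs x)
    have h2 : ∑ x, (p x + q x - 2 * m x) = 2 - 2 * ∑ x, m x := by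
      rw [Finset.sum_sub_distrib, Finset.sum_add_distrib, hpsum, hqsum, ← Finset.mul_sum]
      ring
    rw [heq, h2] at ht
    linarith
  have hasum : ∑ x, a x = t := by
    simp only [ha, Finset.sum_sub_distrib, hpsum, hmsum]; ring
  have hbsum : ∑ x, b x = t := by
    simp only [hb, Finset.sum_sub_distrib, hqsum, hmsum]; ring
  set w : α → α → ℝ := fun x y => (if x = y then m x else 0) + a x * b y / t with hw
  have hw0 : ∀ x y, 0 ≤ w x y := by
    intro x y
    have h1 : (0:ℝ) ≤ (if x = y then m x else 0) := by
      split_ifs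
      · exact hm0 x
      · exact le_rfl
    have h2 : 0 ≤ a x * b y / t := div_nonneg (mul_nonneg (ha0 x) (hb0 y)) htpos.le
    show 0 ≤ (if x = y then m x else 0) + a x * b y / t
    linarith
  have hrow : ∀ x, ∑ y, w x y = p x := by
    intro x
    simp only [hw]
    rw [Finset.sum_add_distrib]
    have h1 : ∑ y, (if x = y then m x else 0) = m x := by
      rw [Finset.sum_ite_eq]; simp
    have h2 : ∑ y, a x * b y / t = a x := by
      rw [← Finset.sum_div, ← Finset.mul_sum, hbsum]
      field_simp
    rw [h1, h2]
    simp [ha]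
  have hcol : ∀ y, ∑ x, w x y = q y := by
    intro y
    simp only [hw]
    rw [Finset.sum_add_distrib]
    have h1 : ∑ x, (if x = y then m x else 0) = m y := by
      rw [Finset.sum_ite_eq']; simp
    have h2 : ∑ x, a x * b y / t = b y := by
      rw [← Finset.sum_div, ← Finset.sum_mul, hasum]
      field_simp
    rw [h1, h2]
    simp [hb]
  have hdiag : ∀ y, w y y = m y := by
    intro y
    show (if y = y then m y else 0) + a y * b y / t = m y
    rw [if_pos rfl, hab0 y, zero_div, add_zero]
  -- Step 1 : H(p) ≤ H(w)
  have step1 : ∑ x, Real.negMulLog (p x) ≤ ∑ x, ∑ y, Real.negMulLog (w x y) := by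
    apply Finset.sum_le_sum
    intro x _
    rw [← hrow x]
    exact subaddNegMulLog _ _ (fun y _ => hw0 x y)
  -- Step 2 : per-column bound
  have step2 : ∀ y, ∑ x, Real.negMulLog (w x y)
      ≤ Real.negMulLog (m y) + Real.negMulLog (b y) + b y * Real.log ((Fintype.card α : ℝ) - 1) := by
    intro y
    have hmem : y ∈ (Finset.univ : Finset α) := Finset.mem_univ y
    have hsplit : ∑ x ∈ (Finset.univ.erase y), Real.negMulLog (w x y) + Real.negMulLog (w y y)
        = ∑ x, Real.negMulLog (w x y) := Finset.sum_erase_add _ _ hmem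
    have hesum : ∑ x ∈ (Finset.univ.erase y), w x y = b y := by
      have h : ∑ x ∈ Finset.univ.erase y, w x y + w y y = ∑ x, w x y :=
        Finset.sum_erase_add _ _ hmem
      rw [hcol y, hdiag y] at h
      simp only [hb]
      linarith
    have hcard : ((Finset.univ.erase y).card : ℝ) = (Fintype.card α : ℝ) - 1 := by
      rw [Finset.card_erase_of_mem hmem, Finset.card_univ, Nat.cast_sub (by omega)]
      simp
    have hj := jensenCard (Finset.univ.erase y) (fun x => w x y) (fun x _ => hw0 x y)
    rw [hesum, hcard] at hj
    rw [← hsplit, hdiag y]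
    linarith
  -- Step 3: sum over y
  have step3 : ∑ x, ∑ y, Real.negMulLog (w x y)
      ≤ ∑ y, Real.negMulLog (m y) + ∑ y, Real.negMulLog (b y)
        + t * Real.log ((Fintype.card α : ℝ) - 1) := by
    rw [Finset.sum_comm]
    calc ∑ y, ∑ x, Real.negMulLog (w x y)
        ≤ ∑ y, (Real.negMulLog (m y) + Real.negMulLog (b y)
            + b y * Real.log ((Fintype.card α : ℝ) - 1)) :=
          Finset.sum_le_sum (fun y _ => step2 y)
      _ = ∑ y, Real.negMulLog (m y) + ∑ y, Real.negMulLog (b y)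
            + t * Real.log ((Fintype.card α : ℝ) - 1) := by
          rw [Finset.sum_add_distrib, Finset.sum_add_distrib, ← Finset.sum_mul, hbsum]
  -- Step 4
  have step4 : ∑ y, Real.negMulLog (m y) + ∑ y, Real.negMulLog (b y)
      ≤ ∑ y, Real.negMulLog (q y) + (Real.negMulLog t + Real.negMulLog (1 - t)) := by
    have hqm : ∀ y ∈ Finset.univ, q y = (0:ℝ) → m y = 0 := by
      intro y _ h
      have := hm0 y
      have h2 : m y ≤ q y := min_le_right _ _
      linarith
    have hqb : ∀ y ∈ Finset.univ, q y = (0:ℝ) → b y = 0 := by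
      intro y hy h
      have := hb0 y
      have h2 : b y ≤ q y := by simp only [hb]; have := hm0 y; linarith
      linarith
    have ls1 := logSum Finset.univ m q (fun y _ => hm0 y) (fun y _ => hq y) hqm
    have ls2 := logSum Finset.univ b q (fun y _ => hb0 y) (fun y _ => hq y) hqb
    rw [hmsum, hqsum, div_one] at ls1
    rw [hbsum, hqsum, div_one] at ls2
    have hsum_eq : ∑ y, (Real.negMulLog (m y) + Real.negMulLog (b y) - Real.negMulLog (q y))
        = -∑ y, m y * Real.log (m y / q y) - ∑ y, b y * Real.log (b y / q y) := by
      rw [← Finset.sum_neg_distrib, ← Finset.sum_sub_distrib]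
      apply Finset.sum_congr rfl
      intro y _
      have hqy : q y = m y + b y := by simp only [ha, hb]; ring
      rw [hqy]
      exact (splitEnt (hm0 y) (hb0 y)).trans (by ring)
    have h1 : Real.negMulLog (1 - t) = -((1 - t) * Real.log (1 - t)) := by
      rw [Real.negMulLog]; ring
    have h2 : Real.negMulLog t = -(t * Real.log t) := by rw [Real.negMulLog]; ring
    have := Finset.sum_add_distrib (s := (Finset.univ : Finset α))
      (f := fun y => Real.negMulLog (m y)) (g := fun y => Real.negMulLog (b y))
    rw [Finset.sum_sub_distrib, Finset.sum_add_distrib] at hsum_eq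
    linarith
  linarith

/-- Binary entropy (base 2). -/
noncomputable def binEnt (x : ℝ) : ℝ :=
  -x * Real.logb 2 x - (1 - x) * Real.logb 2 (1 - x)

/-- Entropy continuity (Fannes–Audenaert/Zhang for classical distributions):
if `d_TV(p,q) = t ≤ 1 − 1/n` then `|H(p) − H(q)| ≤ t·log₂(n−1) + h(t)`. -/
theorem entropy_continuity
    {α : Type*} [Fintype α] (hn : 2 ≤ Fintype.card α)
    (p q : α → ℝ) (hp : ∀ x, 0 ≤ p x) (hq : ∀ x, 0 ≤ q x)
    (hpsum : ∑ x, p x = 1) (hqsum : ∑ x, q x = 1)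
    (t : ℝ) (ht : (1 / 2) * ∑ x, |p x - q x| = t)
    (htub : t ≤ 1 - 1 / (Fintype.card α : ℝ)) :
    |(-∑ x, p x * Real.logb 2 (p x)) - (-∑ x, q x * Real.logb 2 (q x))|
      ≤ t * Real.logb 2 ((Fintype.card α : ℝ) - 1) + binEnt t := by
  have htnn : 0 ≤ t := by
    rw [← ht]
    have : 0 ≤ ∑ x, |p x - q x| := Finset.sum_nonneg (fun x _ => abs_nonneg _)
    linarith
  rcases htnn.eq_or_lt with ht0 | htpos
  · -- t = 0 : p = q pointwise
    have hsum0 : ∑ x, |p x - q x| = 0 := by rw [← ht0] at ht; linarith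
    have hpq : ∀ x, p x = q x := by
      intro x
      have := (Finset.sum_eq_zero_iff_of_nonneg (fun x _ => abs_nonneg (p x - q x))).1
        hsum0 x (Finset.mem_univ x)
      have := abs_eq_zero.1 this
      linarith
    have heq : (∑ x, p x * Real.logb 2 (p x)) = ∑ x, q x * Real.logb 2 (q x) :=
      Finset.sum_congr rfl fun x _ => by rw [hpq x]
    rw [heq, ← ht0]
    simp [binEnt]
  · have key1 := one_sided hn p q hp hq hpsum hqsum t ht htpos
    have ht' : (1 / 2) * ∑ x, |q x - p x| = t := by
      rw [show (∑ x, |q x - p x|) = ∑ x, |p x - q x| from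
        Finset.sum_congr rfl fun x _ => abs_sub_comm _ _]
      exact ht
    have key2 := one_sided hn q p hq hp hqsum hpsum t ht' htpos
    have hlog2 : (0:ℝ) < Real.log 2 := Real.log_pos (by norm_num)
    have hA : (-∑ x, p x * Real.logb 2 (p x)) = (∑ x, Real.negMulLog (p x)) / Real.log 2 := by
      rw [Finset.sum_div, ← Finset.sum_neg_distrib]
      apply Finset.sum_congr rfl
      intro x _
      rw [Real.logb, Real.negMulLog]
      ring
    have hB : (-∑ x, q x * Real.logb 2 (q x)) = (∑ x, Real.negMulLog (q x)) / Real.log 2 := by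
      rw [Finset.sum_div, ← Finset.sum_neg_distrib]
      apply Finset.sum_congr rfl
      intro x _
      rw [Real.logb, Real.negMulLog]
      ring
    have hbe : binEnt t = (Real.negMulLog t + Real.negMulLog (1 - t)) / Real.log 2 := by
      rw [binEnt, Real.logb, Real.logb, Real.negMulLog, Real.negMulLog]
      ring
    have hlogb : Real.logb 2 ((Fintype.card α : ℝ) - 1)
        = Real.log ((Fintype.card α : ℝ) - 1) / Real.log 2 := by rw [Real.logb]
    rw [hA, hB, hbe, hlogb, div_sub_div_same, abs_div, abs_of_pos hlog2]
    have hr : t * (Real.log ((Fintype.card α : ℝ) - 1) / Real.log 2)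
        + (Real.negMulLog t + Real.negMulLog (1 - t)) / Real.log 2
        = (t * Real.log ((Fintype.card α : ℝ) - 1)
            + (Real.negMulLog t + Real.negMulLog (1 - t))) / Real.log 2 := by ring
    rw [hr]
    have habs : |(∑ x, Real.negMulLog (p x)) - ∑ x, Real.negMulLog (q x)|
        ≤ t * Real.log ((Fintype.card α : ℝ) - 1)
          + (Real.negMulLog t + Real.negMulLog (1 - t)) := by
      rw [abs_sub_le_iff]
      constructor
      · linarith
      · linarith
    exact div_le_div_of_nonneg_right habs hlog2.le
end
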